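/- There exists an absolute constant c > 0 such that, in the perturbation setup, if additionally m ε ≤ 1, M is invertible, and c m ε Δ ‖M⁻¹‖ ≤ 1/2, then M̄ is invertible and ‖M⁻¹ − M̄⁻¹‖ ≤ c m ε Δ ‖M⁻¹‖². -/

import Mathlib

/-!
With `K v = ∑ᵢ vᵢ Sⁱ b` (so `M = K* S K`) and `K'` likewise for `S'`, `b'`: peeling off the first
coordinate, `K v = v₀ b + S (K w)` with `w` the tail of `v`; subtracting this recursion for `S'`
and `S` and inducting on `m` gives `‖K' - K‖ ≤ √m ‖b' - b‖ + m ‖S' - S‖ ‖K‖`. Since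
`‖K‖² = ‖K* K‖ ≤ Δ` and `m Δ ≥ 1`, this is at most `2 m ε √Δ`, and expanding `K* S K - K'* S' K'`
into three terms bounds `‖M - M'‖` by `11 m ε Δ`. A Neumann-series perturbation of the inverse
then gives the claim with `c = 22`.
-/

open scoped RealInnerProductSpace
open ContinuousLinearMap

theorem ContinuousLinearMap.norm_pow_apply_le {E : Type*} [SeminormedAddCommGroup E]
    [NormedSpace ℝ E] {T : E →L[ℝ] E} (hT : ‖T‖ ≤ 1) (i : ℕ) (x : E) :
    ‖(T ^ i) x‖ ≤ ‖x‖ := by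
  induction i with
  | zero => simp
  | succ i ih =>
    rw [pow_succ', mul_apply_eq_comp]
    exact (T.le_of_opNorm_le hT _).trans (by simpa using ih)

namespace EuclideanSpace

theorem norm_tail_le {n : ℕ} (v : EuclideanSpace ℝ (Fin (n + 1))) :
    ‖WithLp.toLp 2 (Fin.tail v)‖ ≤ ‖v‖ := by
  simp only [EuclideanSpace.norm_eq, Fin.sum_univ_succ (fun i => ‖v i‖ ^ 2)]
  exact Real.sqrt_le_sqrt (le_add_of_nonneg_left (by positivity))

theorem norm_snoc_zero {n : ℕ} (w : EuclideanSpace ℝ (Fin n)) :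
    ‖WithLp.toLp 2 (Fin.snoc (α := fun _ => ℝ) w 0)‖ = ‖w‖ := by
  simp [EuclideanSpace.norm_eq, Fin.sum_univ_castSucc]

theorem sum_abs_le_sqrt_mul_norm {m : ℕ} (v : EuclideanSpace ℝ (Fin m)) :
    ∑ i, |v i| ≤ √m * ‖v‖ := by
  simpa [EuclideanSpace.norm_eq, mul_comm] using
    Real.sum_mul_le_sqrt_mul_sqrt Finset.univ (fun i => |v i|) (fun _ => 1)

end EuclideanSpace

section Krylov

variable {H : Type*} [NormedAddCommGroup H] [NormedSpace ℝ H]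

noncomputable def krylov (S : H →L[ℝ] H) (b : H) (m : ℕ) : EuclideanSpace ℝ (Fin m) →L[ℝ] H :=
  ∑ i : Fin m, (EuclideanSpace.proj i).smulRight ((S ^ (i : ℕ)) b)

@[simp]
theorem krylov_apply (S : H →L[ℝ] H) (b : H) {m : ℕ} (v : EuclideanSpace ℝ (Fin m)) :
    krylov S b m v = ∑ i, v i • (S ^ (i : ℕ)) b := by
  simp [krylov]

theorem krylov_succ_apply (S : H →L[ℝ] H) (b : H) {n : ℕ} (v : EuclideanSpace ℝ (Fin (n + 1))) :
    krylov S b (n + 1) v = v 0 • b + S (krylov S b n (WithLp.toLp 2 (Fin.tail v))) := by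
  simp only [krylov_apply, Fin.sum_univ_succ, map_sum, map_smul, Fin.val_zero, pow_zero,
    Fin.val_succ, pow_succ', mul_apply_eq_comp, one_apply_eq_self, Fin.tail]

theorem krylov_apply_snoc_zero (S : H →L[ℝ] H) (b : H) {n : ℕ} (w : EuclideanSpace ℝ (Fin n)) :
    krylov S b (n + 1) (WithLp.toLp 2 (Fin.snoc (α := fun _ => ℝ) w 0)) = krylov S b n w := by
  simp only [krylov_apply, Fin.sum_univ_castSucc, Fin.snoc_castSucc, Fin.snoc_last, zero_smul,
    add_zero, Fin.val_castSucc]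

theorem norm_krylov_le_norm_krylov_succ (S : H →L[ℝ] H) (b : H) (n : ℕ) :
    ‖krylov S b n‖ ≤ ‖krylov S b (n + 1)‖ :=
  opNorm_le_bound _ (norm_nonneg _) fun w => by
    simpa only [krylov_apply_snoc_zero, EuclideanSpace.norm_snoc_zero] using
      (krylov S b (n + 1)).le_opNorm (WithLp.toLp 2 (Fin.snoc (α := fun _ => ℝ) w 0))

theorem krylov_sub_krylov_right (S : H →L[ℝ] H) (b b' : H) (m : ℕ) :
    krylov S b' m - krylov S b m = krylov S (b' - b) m := by
  ext v
  simp [← Finset.sum_sub_distrib, smul_sub]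

theorem norm_krylov_le {S : H →L[ℝ] H} (hS : ‖S‖ ≤ 1) (b : H) (m : ℕ) :
    ‖krylov S b m‖ ≤ √m * ‖b‖ := by
  refine opNorm_le_bound _ (by positivity) fun v => ?_
  calc ‖krylov S b m v‖ ≤ ∑ i, |v i| * ‖b‖ := by
        rw [krylov_apply]
        refine (norm_sum_le _ _).trans (Finset.sum_le_sum fun i _ => ?_)
        rw [norm_smul, Real.norm_eq_abs]
        exact mul_le_mul_of_nonneg_left (S.norm_pow_apply_le hS _ _) (abs_nonneg _)
    _ ≤ √m * ‖v‖ * ‖b‖ := by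
        rw [← Finset.sum_mul]
        exact mul_le_mul_of_nonneg_right (EuclideanSpace.sum_abs_le_sqrt_mul_norm v) (norm_nonneg _)
    _ = √m * ‖b‖ * ‖v‖ := by ring

/-- With `w` the tail of `v` and `D = krylov S' b - krylov S b`, one has
`D v = S' (D w) + (S' - S) (krylov S b w)`. -/
theorem norm_krylov_sub_krylov_left_le {S S' : H →L[ℝ] H} (hS' : ‖S'‖ ≤ 1) (b : H) (m : ℕ) :
    ‖krylov S' b m - krylov S b m‖ ≤ m * ‖S' - S‖ * ‖krylov S b m‖ := by
  induction m with
  | zero => simp [Subsingleton.elim (krylov S' b 0 - krylov S b 0) 0]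
  | succ n ih =>
    refine opNorm_le_bound _ (by positivity) fun v => ?_
    set w := WithLp.toLp 2 (Fin.tail v)
    have hw : ‖w‖ ≤ ‖v‖ := EuclideanSpace.norm_tail_le v
    have hsplit : (krylov S' b (n + 1) - krylov S b (n + 1)) v
        = S' ((krylov S' b n - krylov S b n) w) + (S' - S) (krylov S b n w) := by
      simp only [sub_apply, krylov_succ_apply, map_sub]
      abel
    calc ‖(krylov S' b (n + 1) - krylov S b (n + 1)) v‖
        ≤ ‖(krylov S' b n - krylov S b n) w‖ + ‖S' - S‖ * ‖krylov S b n w‖ := by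
          rw [hsplit]
          exact (norm_add_le _ _).trans (add_le_add
            ((S'.le_of_opNorm_le hS' _).trans_eq (one_mul _)) (le_opNorm _ _))
      _ ≤ n * ‖S' - S‖ * ‖krylov S b n‖ * ‖w‖ + ‖S' - S‖ * (‖krylov S b n‖ * ‖w‖) := by
          gcongr
          · exact (le_opNorm _ _).trans (by gcongr)
          · exact le_opNorm _ _
      _ = (n + 1) * ‖S' - S‖ * (‖krylov S b n‖ * ‖w‖) := by ring
      _ ≤ (n + 1) * ‖S' - S‖ * (‖krylov S b (n + 1)‖ * ‖v‖) := by
          gcongr; exact norm_krylov_le_norm_krylov_succ S b n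
      _ = (n + 1 : ℕ) * ‖S' - S‖ * ‖krylov S b (n + 1)‖ * ‖v‖ := by push_cast; ring

theorem norm_krylov_sub_krylov_le {S S' : H →L[ℝ] H} (hS' : ‖S'‖ ≤ 1) (b b' : H) (m : ℕ) :
    ‖krylov S' b' m - krylov S b m‖ ≤ √m * ‖b' - b‖ + m * ‖S' - S‖ * ‖krylov S b m‖ := by
  calc ‖krylov S' b' m - krylov S b m‖
      = ‖krylov S' (b' - b) m + (krylov S' b m - krylov S b m)‖ := by
        rw [← krylov_sub_krylov_right]; abel_nf
    _ ≤ √m * ‖b' - b‖ + m * ‖S' - S‖ * ‖krylov S b m‖ :=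
        (norm_add_le _ _).trans
          (add_le_add (norm_krylov_le hS' _ m) (norm_krylov_sub_krylov_left_le hS' b m))

end Krylov

section Gram

variable {E F : Type*} [NormedAddCommGroup E] [InnerProductSpace ℝ E] [CompleteSpace E]
  [NormedAddCommGroup F] [InnerProductSpace ℝ F] [CompleteSpace F]

theorem norm_adjoint_comp_comp_sub_le (A B : E →L[ℝ] F) (S T : F →L[ℝ] F) :
    ‖adjoint A ∘L (S ∘L A) - adjoint B ∘L (T ∘L B)‖
      ≤ ‖A - B‖ * ‖S‖ * ‖A‖ + ‖B‖ * ‖S - T‖ * ‖A‖ + ‖B‖ * ‖T‖ * ‖A - B‖ := by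
  have hdecomp : adjoint A ∘L (S ∘L A) - adjoint B ∘L (T ∘L B)
      = adjoint (A - B) ∘L (S ∘L A) + adjoint B ∘L ((S - T) ∘L A)
        + adjoint B ∘L (T ∘L (A - B)) := by
    simp only [map_sub, sub_comp, comp_sub]
    abel
  have hcomp : ∀ (P : F →L[ℝ] E) (Q : F →L[ℝ] F) (X : E →L[ℝ] F),
      ‖P ∘L (Q ∘L X)‖ ≤ ‖P‖ * ‖Q‖ * ‖X‖ := fun P Q X =>
    (opNorm_comp_le _ _).trans (by rw [mul_assoc]; gcongr; exact opNorm_comp_le _ _)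
  rw [hdecomp]
  refine (norm_add₃_le).trans (add_le_add (add_le_add ?_ ?_) ?_) <;>
    refine (hcomp _ _ _).trans_eq ?_ <;> simp only [LinearIsometryEquiv.norm_map]

end Gram

section InversePerturbation

variable {A : Type*} [NormedRing A] [HasSummableGeomSeries A]

theorem IsUnit.of_norm_inverse_mul_norm_sub_lt_one {x y : A} (hx : IsUnit x)
    (h : ‖Ring.inverse x‖ * ‖x - y‖ < 1) : IsUnit y := by
  nontriviality A
  obtain ⟨u, rfl⟩ := hx
  have hu : 0 < ‖(↑u⁻¹ : A)‖ := Units.norm_pos u⁻¹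
  rw [Ring.inverse_unit, norm_sub_rev] at h
  exact (u.ofNearby y (by rwa [← one_div, lt_div_iff₀ hu, mul_comm])).isUnit

theorem IsUnit.norm_inverse_sub_inverse_le {x y : A} (hx : IsUnit x)
    (h : ‖Ring.inverse x‖ * ‖x - y‖ ≤ 1 / 2) :
    IsUnit y ∧ ‖Ring.inverse x - Ring.inverse y‖ ≤ 2 * ‖Ring.inverse x‖ ^ 2 * ‖x - y‖ := by
  have hy := hx.of_norm_inverse_mul_norm_sub_lt_one (h.trans_lt (by norm_num))
  have hdiff := Ring.inverse_sub_inverse (iff_of_true hx hy)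
  have hnorm :
      ‖Ring.inverse x - Ring.inverse y‖ ≤ ‖Ring.inverse x‖ * ‖x - y‖ * ‖Ring.inverse y‖ := by
    rw [hdiff, norm_sub_rev x y]
    exact (norm_mul_le _ _).trans (by gcongr; exact norm_mul_le _ _)
  have hy_le : ‖Ring.inverse y‖ ≤ 2 * ‖Ring.inverse x‖ := by
    have h1 := norm_le_norm_add_norm_sub (Ring.inverse x) (Ring.inverse y)
    have h2 : ‖Ring.inverse x‖ * ‖x - y‖ * ‖Ring.inverse y‖ ≤ 1 / 2 * ‖Ring.inverse y‖ := by
      gcongr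
    linarith
  refine ⟨hy, hnorm.trans ?_⟩
  calc ‖Ring.inverse x‖ * ‖x - y‖ * ‖Ring.inverse y‖
      ≤ ‖Ring.inverse x‖ * ‖x - y‖ * (2 * ‖Ring.inverse x‖) := by gcongr
    _ = 2 * ‖Ring.inverse x‖ ^ 2 * ‖x - y‖ := by ring

end InversePerturbation

section KrylovGram

variable {H : Type*} [NormedAddCommGroup H] [InnerProductSpace ℝ H] [CompleteSpace H]

theorem norm_adjoint_krylov_comp_sub_le {S S' : H →L[ℝ] H} (hS : ‖S‖ ≤ 1) (hS' : ‖S'‖ ≤ 1)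
    {b b' : H} {ε Δ : ℝ} (hSS' : ‖S - S'‖ ≤ ε) (hbb' : ‖b - b'‖ ≤ ε) {m : ℕ} (hm : 1 ≤ m)
    (hmε : m * ε ≤ 1) (hK : ‖krylov S b m‖ ^ 2 ≤ Δ) (hmΔ : 1 ≤ m * Δ) :
    ‖adjoint (krylov S b m) ∘L (S ∘L krylov S b m)
        - adjoint (krylov S' b' m) ∘L (S' ∘L krylov S' b' m)‖ ≤ 11 * m * ε * Δ := by
  have hm1 : (1 : ℝ) ≤ m := by exact_mod_cast hm
  have hm0 : (0 : ℝ) ≤ m := zero_le_one.trans hm1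
  have hε : 0 ≤ ε := (norm_nonneg _).trans hSS'
  set s := √Δ
  have hs : s * s = Δ := Real.mul_self_sqrt ((sq_nonneg _).trans hK)
  have hKs : ‖krylov S b m‖ ≤ s := Real.le_sqrt_of_sq_le hK
  have hsqrt_m : √m ≤ m * s := by
    calc √m = √m * 1 := (mul_one _).symm
      _ ≤ √m * √(m * Δ) := by gcongr; simpa using Real.sqrt_le_sqrt hmΔ
      _ = m * s := by rw [Real.sqrt_mul hm0, ← mul_assoc, Real.mul_self_sqrt hm0]
  have hKK' : ‖krylov S b m - krylov S' b' m‖ ≤ 2 * m * ε * s := by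
    rw [norm_sub_rev]
    refine (norm_krylov_sub_krylov_le hS' b b' m).trans ?_
    rw [norm_sub_rev b', norm_sub_rev S']
    calc √m * ‖b - b'‖ + m * ‖S - S'‖ * ‖krylov S b m‖ ≤ m * s * ε + m * ε * s := by gcongr
      _ = 2 * m * ε * s := by ring
  have hK's : ‖krylov S' b' m‖ ≤ 3 * s := by
    calc ‖krylov S' b' m‖ ≤ ‖krylov S b m‖ + ‖krylov S b m - krylov S' b' m‖ :=
          norm_le_norm_add_norm_sub _ _
      _ ≤ s + 2 * (m * ε) * s := by linarith
      _ ≤ s + 2 * 1 * s := by gcongr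
      _ = 3 * s := by ring
  refine (norm_adjoint_comp_comp_sub_le _ _ S S').trans ?_
  calc _ ≤ (2 * m * ε * s) * 1 * s + (3 * s) * ε * s + (3 * s) * 1 * (2 * m * ε * s) := by gcongr
    _ = (8 * m + 3) * ε * Δ := by rw [← hs]; ring
    _ ≤ 11 * m * ε * Δ := by
        nlinarith [mul_nonneg (mul_nonneg (sub_nonneg.mpr hm1) hε) (hs ▸ mul_self_nonneg s)]

end KrylovGram

/-- There is an absolute constant `c > 0` such that, in the perturbation setup, if `m ε ≤ 1`,
`M` is invertible and `c m ε Δ ‖M⁻¹‖ ≤ 1/2`, then `M̄` is invertible and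
`‖M⁻¹ − M̄⁻¹‖ ≤ c m ε Δ ‖M⁻¹‖²`. -/
theorem stmt15 :
    ∃ c : ℝ, 0 < c ∧
      ∀ (H : Type) (_ : NormedAddCommGroup H) (_ : InnerProductSpace ℝ H) (_ : CompleteSpace H)
        (S S' : H →L[ℝ] H),
        IsSelfAdjoint S → IsSelfAdjoint S' →
        (∀ x, 0 ≤ ⟪S x, x⟫) → (∀ x, 0 ≤ ⟪S' x, x⟫) → ‖S‖ ≤ 1 → ‖S'‖ ≤ 1 →
        ∀ (b b' : H) (ε : ℝ), 0 < ε → ‖S - S'‖ ≤ ε → ‖b - b'‖ ≤ ε →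
        ∀ m : ℕ, 1 ≤ m →
        ∀ (R R' : EuclideanSpace ℝ (Fin m) →L[ℝ] H),
          (∀ v, R v = ∑ i : Fin m, v i • (S ^ (i : ℕ)) b) →
          (∀ v, R' v = ∑ i : Fin m, v i • (S' ^ (i : ℕ)) b') →
        ∀ (M M' Mp : EuclideanSpace ℝ (Fin m) →L[ℝ] EuclideanSpace ℝ (Fin m)),
          M = (adjoint R) ∘L (S ∘L R) →
          M' = (adjoint R') ∘L (S' ∘L R') →
          Mp = (adjoint R) ∘L R →
        ∀ Δ : ℝ, Δ = max ‖Mp‖ (1 / (m : ℝ)) →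
          (m : ℝ) * ε ≤ 1 →
          IsUnit M →
          c * m * ε * Δ * ‖Ring.inverse M‖ ≤ 1 / 2 →
          IsUnit M' ∧
            ‖Ring.inverse M - Ring.inverse M'‖ ≤ c * m * ε * Δ * ‖Ring.inverse M‖ ^ 2 := by
  refine ⟨22, by norm_num, ?_⟩
  intro H _ _ _ S S' _ _ _ _ hS hS' b b' ε _ hSS' hbb' m hm R R' hR hR' M M' Mp hM hM' hMp Δ hΔ
    hmε hMu hsmall
  obtain rfl : R = krylov S b m := ext fun v => (hR v).trans (krylov_apply S b v).symm
  obtain rfl : R' = krylov S' b' m := ext fun v => (hR' v).trans (krylov_apply S' b' v).symm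
  have hmΔ : 1 ≤ m * Δ := by
    rw [← div_le_iff₀' (by exact_mod_cast hm), hΔ]
    exact le_max_right _ _
  have hK : ‖krylov S b m‖ ^ 2 ≤ Δ := by
    rw [sq, ← norm_adjoint_comp_self, ← hMp, hΔ]
    exact le_max_left _ _
  have hMM' : ‖M - M'‖ ≤ 11 * m * ε * Δ :=
    hM ▸ hM' ▸ norm_adjoint_krylov_comp_sub_le hS hS' hSS' hbb' hm hmε hK hmΔ
  have hMM'_scaled := mul_le_mul_of_nonneg_left hMM' (norm_nonneg (Ring.inverse M))
  obtain ⟨hM'u, hinv⟩ := hMu.norm_inverse_sub_inverse_le (y := M') (by linarith)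
  refine ⟨hM'u, hinv.trans ?_⟩
  calc 2 * ‖Ring.inverse M‖ ^ 2 * ‖M - M'‖ ≤ 2 * ‖Ring.inverse M‖ ^ 2 * (11 * m * ε * Δ) := by
        gcongr
    _ = 22 * m * ε * Δ * ‖Ring.inverse M‖ ^ 2 := by ring
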